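/- arXiv:2306.13185 — 7 statements merged into one kernel-verified Lean document; each statement's English description precedes it below -/
import Mathlib

section
/- Suppose that for some δ ≥ 0 a positive solution κ_δ of the self-consistent equation exists (along with the ridgeless solution κ_0). Then the ridgeless omniscient risk estimate is bounded by the overfitting coefficient times the ridge risk estimate: R̃_0 ≤ E_0 · R̃_δ. Consequently, the predicted cost of overfitting C̃ = R̃_0 / inf_{δ ≥ 0} R̃_δ satisfies C̃ ≤ E_0. -/
/-!
Raising the ridge from `0` to `δ` can only raise the scale: the total learnability
`∑ λᵢ/(λᵢ + κ)` is strictly decreasing in `κ`, equals `n` at `κ₀` and is at most `n` at `κ_δ`,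
so `κ₀ ≤ κ_δ`. Each `1 - L_{i,δ}` then dominates `1 - L_{i,0}`, so the bias part of `R̃₀` is at
most that of `R̃_δ`, and `R̃₀ ≤ E₀ · (bias_δ + σ²) ≤ E₀ · E_δ · (bias_δ + σ²) = E₀ · R̃_δ` because
`E_δ ≥ 1` (since `L² < L` on some mode, `∑ L² < ∑ L ≤ n`). Dividing by the infimum of `R̃_δ`
gives the bound on the cost of overfitting.
-/

noncomputable def learnability (lam : ℕ → ℝ) (c : ℝ) (i : ℕ) : ℝ := lam i / (lam i + c)

namespace learnability

variable {lam : ℕ → ℝ} {c c' : ℝ}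

lemma nonneg (hlam : ∀ i, 0 ≤ lam i) (hc : 0 ≤ c) (i : ℕ) : 0 ≤ learnability lam c i :=
  div_nonneg (hlam i) (add_nonneg (hlam i) hc)

lemma le_one (hlam : ∀ i, 0 ≤ lam i) (hc : 0 ≤ c) (i : ℕ) : learnability lam c i ≤ 1 :=
  div_le_one_of_le₀ (le_add_of_nonneg_right hc) (add_nonneg (hlam i) hc)

lemma le_of_le (hlam : ∀ i, 0 ≤ lam i) (hc : 0 < c) (hcc' : c ≤ c') (i : ℕ) :
    learnability lam c' i ≤ learnability lam c i :=
  div_le_div_of_nonneg_left (hlam i) (add_pos_of_nonneg_of_pos (hlam i) hc) (by linarith)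

lemma lt_of_lt {i : ℕ} (hi : 0 < lam i) (hc : 0 ≤ c) (hcc' : c < c') :
    learnability lam c' i < learnability lam c i :=
  div_lt_div_of_pos_left hi (by linarith) (by linarith)

lemma sq_le_self (hlam : ∀ i, 0 ≤ lam i) (hc : 0 ≤ c) (i : ℕ) :
    learnability lam c i ^ 2 ≤ learnability lam c i :=
  pow_le_of_le_one (nonneg hlam hc i) (le_one hlam hc i) two_ne_zero

lemma sq_lt_self {i : ℕ} (hi : 0 < lam i) (hc : 0 < c) :
    learnability lam c i ^ 2 < learnability lam c i := by
  have hpos : 0 < learnability lam c i := div_pos hi (by linarith)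
  have hlt_one : learnability lam c i < 1 := (div_lt_one (by linarith)).2 (by linarith)
  nlinarith

lemma summable (hlam : ∀ i, 0 ≤ lam i) (hsum : Summable lam) (hc : 0 < c) :
    Summable (learnability lam c) :=
  (hsum.div_const c).of_nonneg_of_le (nonneg hlam hc.le) fun i =>
    div_le_div_of_nonneg_left (hlam i) hc (le_add_of_nonneg_left (hlam i))

lemma summable_sq (hlam : ∀ i, 0 ≤ lam i) (hsum : Summable lam) (hc : 0 < c) :
    Summable fun i => learnability lam c i ^ 2 :=
  (summable hlam hsum hc).of_nonneg_of_le (fun _ => sq_nonneg _)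
    (sq_le_self hlam hc.le)

lemma tsum_sq_lt_tsum (hlam : ∀ i, 0 ≤ lam i) (hsum : Summable lam) (hne : ∃ i, lam i ≠ 0)
    (hc : 0 < c) : ∑' i, learnability lam c i ^ 2 < ∑' i, learnability lam c i := by
  obtain ⟨i, hi⟩ := hne
  exact (summable_sq hlam hsum hc).tsum_lt_tsum (sq_le_self hlam hc.le)
    (sq_lt_self ((hlam i).lt_of_ne' hi) hc) (summable hlam hsum hc)

lemma tsum_lt_tsum_of_lt (hlam : ∀ i, 0 ≤ lam i) (hsum : Summable lam) (hne : ∃ i, lam i ≠ 0)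
    (hc : 0 < c) (hcc' : c < c') :
    ∑' i, learnability lam c' i < ∑' i, learnability lam c i := by
  obtain ⟨i, hi⟩ := hne
  exact (summable hlam hsum (hc.trans hcc')).tsum_lt_tsum (le_of_le hlam hc hcc'.le)
    (lt_of_lt ((hlam i).lt_of_ne' hi) hc.le hcc') (summable hlam hsum hc)

lemma le_of_tsum_le (hlam : ∀ i, 0 ≤ lam i) (hsum : Summable lam) (hne : ∃ i, lam i ≠ 0)
    {c₀ : ℝ} (hc : 0 < c) (h : ∑' i, learnability lam c i ≤ ∑' i, learnability lam c₀ i) :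
    c₀ ≤ c :=
  le_of_not_gt fun hlt => (tsum_lt_tsum_of_lt hlam hsum hne hc hlt).not_ge h

lemma tsum_residual_le (hlam : ∀ i, 0 ≤ lam i) {v : ℕ → ℝ} (hv : Summable fun i => v i ^ 2)
    (hc : 0 < c) (hcc' : c ≤ c') :
    ∑' i, (1 - learnability lam c i) ^ 2 * v i ^ 2 ≤
      ∑' i, (1 - learnability lam c' i) ^ 2 * v i ^ 2 := by
  have hres : ∀ {d : ℝ}, 0 ≤ d → ∀ i, 0 ≤ 1 - learnability lam d i := fun hd i =>
    sub_nonneg.2 (le_one hlam hd i)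
  have hsummable : ∀ {d : ℝ}, 0 ≤ d → Summable fun i => (1 - learnability lam d i) ^ 2 * v i ^ 2 :=
    fun hd => hv.of_nonneg_of_le (fun i => by positivity) fun i =>
      mul_le_of_le_one_left (sq_nonneg _)
        (pow_le_one₀ (hres hd i) (sub_le_self _ (nonneg hlam hd i)))
  refine (hsummable hc.le).tsum_le_tsum (fun i => ?_) (hsummable (hc.le.trans hcc'))
  gcongr
  · exact hres hc.le i
  · exact le_of_le hlam hc hcc' i

end learnability

lemma one_le_div_sub {n s : ℝ} (hs : 0 ≤ s) (hsn : s < n) : 1 ≤ n / (n - s) :=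
  (one_le_div (by linarith)).2 (by linarith)

lemma div_sInf_le_of_forall_le {S : Set ℝ} {a e : ℝ} (hS : S.Nonempty) (ha : 0 ≤ a) (he : 0 < e)
    (h : ∀ x ∈ S, a ≤ e * x) : a / sInf S ≤ e := by
  have hlb : a / e ≤ sInf S :=
    le_csInf hS fun x hx => (div_le_iff₀' he).2 (h x hx)
  rcases le_or_gt (sInf S) 0 with hnonpos | hpos
  · exact (div_nonpos_of_nonneg_of_nonpos ha hnonpos).trans he.le
  · exact (div_le_iff₀ hpos).2 (by rwa [div_le_iff₀' he] at hlb)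

theorem cost_of_overfitting_le_overfitting_coefficient_general
    (n : ℕ)
    (lam : ℕ → ℝ) (hlam_nonneg : ∀ i, 0 ≤ lam i)
    (hlam_summable : Summable lam) (hlam_ne : ∃ i, lam i ≠ 0)
    (v : ℕ → ℝ) (hv : Summable fun i => v i ^ 2)
    (σ2 : ℝ) (hσ2 : 0 ≤ σ2)
    (κ : ℝ → ℝ)
    (hκ_pos : ∀ δ, 0 ≤ δ → 0 < κ δ)
    (hκ_eq : ∀ δ, 0 ≤ δ → ∑' i, lam i / (lam i + κ δ) + δ / κ δ = (n : ℝ))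
    (E : ℝ → ℝ)
    (hE : ∀ δ, E δ = (n : ℝ) / ((n : ℝ) - ∑' i, (lam i / (lam i + κ δ)) ^ 2))
    (Rt : ℝ → ℝ)
    (hRt : ∀ δ, Rt δ = E δ * (∑' i, (1 - lam i / (lam i + κ δ)) ^ 2 * v i ^ 2 + σ2)) :
    (∀ δ, 0 ≤ δ → Rt 0 ≤ E 0 * Rt δ) ∧
      Rt 0 / sInf (Rt '' {δ : ℝ | 0 ≤ δ}) ≤ E 0 := by
  have hκ_eq' : ∀ δ, 0 ≤ δ → ∑' i, learnability lam (κ δ) i + δ / κ δ = n := hκ_eq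
  have hE' : ∀ δ, E δ = n / (n - ∑' i, learnability lam (κ δ) i ^ 2) := hE
  have hRt' : ∀ δ, Rt δ = E δ * (∑' i, (1 - learnability lam (κ δ) i) ^ 2 * v i ^ 2 + σ2) := hRt
  have htotal_le : ∀ δ, 0 ≤ δ → ∑' i, learnability lam (κ δ) i ≤ n := fun δ hδ => by
    have := div_nonneg hδ (hκ_pos δ hδ).le
    linarith [hκ_eq' δ hδ]
  have hE_ge_one : ∀ δ, 0 ≤ δ → 1 ≤ E δ := fun δ hδ => hE' δ ▸ one_le_div_sub
    (tsum_nonneg fun i => sq_nonneg _)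
    ((learnability.tsum_sq_lt_tsum hlam_nonneg hlam_summable hlam_ne (hκ_pos δ hδ)).trans_le
      (htotal_le δ hδ))
  have hκ_le : ∀ δ, 0 ≤ δ → κ 0 ≤ κ δ := fun δ hδ =>
    learnability.le_of_tsum_le hlam_nonneg hlam_summable hlam_ne (hκ_pos δ hδ)
      ((htotal_le δ hδ).trans (by simpa using (hκ_eq' 0 le_rfl).ge))
  have hrisk_nonneg : ∀ δ, 0 ≤ ∑' i, (1 - learnability lam (κ δ) i) ^ 2 * v i ^ 2 + σ2 :=
    fun δ => add_nonneg (tsum_nonneg fun i => by positivity) hσ2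
  have hE0 : 0 < E 0 := one_pos.trans_le (hE_ge_one 0 le_rfl)
  have hmain : ∀ δ, 0 ≤ δ → Rt 0 ≤ E 0 * Rt δ := fun δ hδ => by
    rw [hRt' 0, hRt' δ]
    refine mul_le_mul_of_nonneg_left ?_ hE0.le
    calc ∑' i, (1 - learnability lam (κ 0) i) ^ 2 * v i ^ 2 + σ2
        ≤ ∑' i, (1 - learnability lam (κ δ) i) ^ 2 * v i ^ 2 + σ2 := by
          grw [learnability.tsum_residual_le hlam_nonneg hv (hκ_pos 0 le_rfl) (hκ_le δ hδ)]
      _ ≤ E δ * (∑' i, (1 - learnability lam (κ δ) i) ^ 2 * v i ^ 2 + σ2) :=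
          le_mul_of_one_le_left (hrisk_nonneg δ) (hE_ge_one δ hδ)
  refine ⟨hmain, div_sInf_le_of_forall_le ⟨Rt 0, 0, le_refl (0 : ℝ), rfl⟩ ?_ hE0 ?_⟩
  · exact hRt' 0 ▸ mul_nonneg hE0.le (hrisk_nonneg 0)
  · rintro _ ⟨δ, hδ, rfl⟩
    exact hmain δ hδ

/-- The ridgeless omniscient risk estimate is bounded by the
overfitting coefficient times the ridge risk estimate, `R̃_0 ≤ E_0 · R̃_δ`,
and consequently the predicted cost of overfitting
`C̃ = R̃_0 / inf_{δ ≥ 0} R̃_δ` satisfies `C̃ ≤ E_0`. -/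
theorem cost_of_overfitting_le_overfitting_coefficient
    (n : ℕ) (hn : 1 ≤ n)
    (lam : ℕ → ℝ) (hlam_nonneg : ∀ i, 0 ≤ lam i) (hlam_mono : Antitone lam)
    (hlam_summable : Summable lam) (hlam_ne : ∃ i, lam i ≠ 0)
    (v : ℕ → ℝ) (hv : Summable fun i => v i ^ 2)
    (σ2 : ℝ) (hσ2 : 0 ≤ σ2)
    (κ : ℝ → ℝ)
    (hκ_pos : ∀ δ, 0 ≤ δ → 0 < κ δ)
    (hκ_eq : ∀ δ, 0 ≤ δ → ∑' i, lam i / (lam i + κ δ) + δ / κ δ = (n : ℝ))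
    (E : ℝ → ℝ)
    (hE : ∀ δ, E δ = (n : ℝ) / ((n : ℝ) - ∑' i, (lam i / (lam i + κ δ)) ^ 2))
    (Rt : ℝ → ℝ)
    (hRt : ∀ δ, Rt δ = E δ * (∑' i, (1 - lam i / (lam i + κ δ)) ^ 2 * v i ^ 2 + σ2)) :
    (∀ δ, 0 ≤ δ → Rt 0 ≤ E 0 * Rt δ) ∧
      Rt 0 / sInf (Rt '' {δ : ℝ | 0 ≤ δ}) ≤ E 0 :=
  cost_of_overfitting_le_overfitting_coefficient_general n lam hlam_nonneg hlam_summable hlam_ne v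
    hv σ2 hσ2 κ hκ_pos hκ_eq E hE Rt hRt
end

section
/- Suppose (λ_i)_{i≥1} is a nonincreasing summable sequence of nonnegative reals with λ_i > 0 for infinitely many i, and n ≥ 1 is an integer. Then for every δ ≥ 0 there exists a unique κ_δ > 0 satisfying Σ_{i≥1} λ_i/(λ_i + κ_δ) + δ/κ_δ = n; the map δ ↦ κ_δ is strictly increasing on [0, ∞); the map δ ↦ Σ_{i≥1} (λ_i/(λ_i + κ_δ))² is nonincreasing; and consequently E_δ ≤ E_0 for every δ ≥ 0. -/
/-!
Write `df₁(κ) = ∑ λᵢ/(λᵢ + κ)`. It is continuous and strictly decreasing on `(0, ∞)`, at most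
`(∑ λᵢ)/κ` for large `κ`, and, because infinitely many `λᵢ` are positive, above any bound for
small `κ`. Hence `κ ↦ df₁(κ) + δ/κ` takes the value `n ≥ 1` exactly once. If `δ₁ < δ₂` and
`κ_{δ₂} ≤ κ_{δ₁}`, then `n = df₁(κ_{δ₂}) + δ₂/κ_{δ₂} ≥ df₁(κ_{δ₁}) + δ₂/κ_{δ₁} > n`, so `δ ↦ κ_δ`
increases. Each term of `df₂(κ) = ∑ (λᵢ/(λᵢ + κ))²` decreases in `κ`, so `df₂(κ_δ) ≤ df₂(κ₀)`,
and `df₂(κ₀) < df₁(κ₀) = n` because the terms lie in `[0, 1)`; this gives `E_δ ≤ E₀`.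
-/

open Set

namespace KernelRidge

noncomputable def df₁ (lam : ℕ → ℝ) (κ : ℝ) : ℝ := ∑' i, lam i / (lam i + κ)

noncomputable def df₂ (lam : ℕ → ℝ) (κ : ℝ) : ℝ := ∑' i, (lam i / (lam i + κ)) ^ 2

variable {lam : ℕ → ℝ}

theorem summable_div_add (hs : Summable lam) (hnn : ∀ i, 0 ≤ lam i) {κ : ℝ} (hκ : 0 < κ) :
    Summable fun i => lam i / (lam i + κ) :=
  (hs.div_const κ).of_nonneg_of_le (fun i => by have := hnn i; positivity)
    (fun i => div_le_div_of_nonneg_left (hnn i) hκ (by linarith [hnn i]))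

theorem sq_div_add_le_div_add {x κ : ℝ} (hx : 0 ≤ x) (hκ : 0 < κ) :
    (x / (x + κ)) ^ 2 ≤ x / (x + κ) := by
  have h₀ : 0 ≤ x / (x + κ) := by positivity
  have h₁ : x / (x + κ) ≤ 1 := (div_le_one (by linarith)).2 (by linarith)
  nlinarith

theorem summable_sq_div_add (hs : Summable lam) (hnn : ∀ i, 0 ≤ lam i) {κ : ℝ} (hκ : 0 < κ) :
    Summable fun i => (lam i / (lam i + κ)) ^ 2 :=
  (summable_div_add hs hnn hκ).of_nonneg_of_le (fun _ => sq_nonneg _)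
    (fun i => sq_div_add_le_div_add (hnn i) hκ)

theorem df₁_le (hs : Summable lam) (hnn : ∀ i, 0 ≤ lam i) {κ : ℝ} (hκ : 0 < κ) :
    df₁ lam κ ≤ (∑' i, lam i) / κ := by
  rw [df₁, ← tsum_div_const]
  exact (summable_div_add hs hnn hκ).tsum_le_tsum
    (fun i => div_le_div_of_nonneg_left (hnn i) hκ (by linarith [hnn i])) (hs.div_const κ)

theorem df₁_antitoneOn (hs : Summable lam) (hnn : ∀ i, 0 ≤ lam i) :
    AntitoneOn (df₁ lam) (Ioi 0) := fun a ha b hb hab =>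
  (summable_div_add hs hnn hb).tsum_le_tsum
    (fun i => div_le_div_of_nonneg_left (hnn i) (by linarith [hnn i, mem_Ioi.1 ha])
      (by linarith)) (summable_div_add hs hnn ha)

theorem df₁_strictAntiOn (hs : Summable lam) (hnn : ∀ i, 0 ≤ lam i) (hpos : ∃ i, 0 < lam i) :
    StrictAntiOn (df₁ lam) (Ioi 0) := fun a ha b hb hab => by
  obtain ⟨j, hj⟩ := hpos
  exact (summable_div_add hs hnn hb).tsum_lt_tsum (i := j)
    (fun i => div_le_div_of_nonneg_left (hnn i) (by linarith [hnn i, mem_Ioi.1 ha])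
      (by linarith))
    (div_lt_div_of_pos_left hj (by linarith [mem_Ioi.1 ha]) (by linarith))
    (summable_div_add hs hnn ha)

theorem continuousOn_df₁ (hs : Summable lam) (hnn : ∀ i, 0 ≤ lam i) {a : ℝ} (ha : 0 < a) :
    ContinuousOn (df₁ lam) (Ici a) := by
  refine continuousOn_tsum (u := fun i => lam i / a) (fun i => ?_) (hs.div_const a)
    (fun i x hx => ?_)
  · exact continuousOn_const.div (by fun_prop)
      (fun x hx => by linarith [hnn i, mem_Ici.1 hx])
  · have hx : a ≤ x := hx
    rw [Real.norm_of_nonneg (div_nonneg (hnn i) (by linarith [hnn i]))]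
    exact div_le_div_of_nonneg_left (hnn i) ha (by linarith [hnn i])

theorem card_div_two_le_df₁ (hs : Summable lam) (hnn : ∀ i, 0 ≤ lam i) {T : Finset ℕ}
    (hT : T.Nonempty) (hpos : ∀ i ∈ T, 0 < lam i) :
    (T.card : ℝ) / 2 ≤ df₁ lam (T.inf' hT lam) := by
  set ε := T.inf' hT lam
  have hε : 0 < ε := (Finset.lt_inf'_iff hT).2 hpos
  have half_le : ∀ i ∈ T, (1 : ℝ) / 2 ≤ lam i / (lam i + ε) := fun i hi => by
    have : ε ≤ lam i := T.inf'_le lam hi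
    rw [div_le_div_iff₀ two_pos (by linarith)]
    linarith
  calc (T.card : ℝ) / 2 = T.card • ((1 : ℝ) / 2) := by rw [nsmul_eq_mul]; ring
    _ ≤ ∑ i ∈ T, lam i / (lam i + ε) := T.card_nsmul_le_sum _ _ half_le
    _ ≤ df₁ lam ε := (summable_div_add hs hnn hε).sum_le_tsum T
      (fun i _ => by have := hnn i; positivity)

theorem exists_le_df₁ (hs : Summable lam) (hnn : ∀ i, 0 ≤ lam i)
    (hinf : {i | 0 < lam i}.Infinite) (n : ℕ) : ∃ a, 0 < a ∧ (n : ℝ) ≤ df₁ lam a := by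
  obtain ⟨T, hT_pos, hT_card⟩ := hinf.exists_subset_card_eq (2 * n + 2)
  have hT : T.Nonempty := by rw [← Finset.card_pos, hT_card]; omega
  refine ⟨T.inf' hT lam, (Finset.lt_inf'_iff hT).2 hT_pos, ?_⟩
  have := card_div_two_le_df₁ hs hnn hT hT_pos
  rw [hT_card] at this
  push_cast at this
  linarith

theorem df₁_add_div_strictAntiOn (hs : Summable lam) (hnn : ∀ i, 0 ≤ lam i)
    (hpos : ∃ i, 0 < lam i) {δ : ℝ} (hδ : 0 ≤ δ) :
    StrictAntiOn (fun κ => df₁ lam κ + δ / κ) (Ioi 0) := fun _ ha _ hb hab =>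
  add_lt_add_of_lt_of_le (df₁_strictAntiOn hs hnn hpos ha hb hab)
    (div_le_div_of_nonneg_left hδ ha hab.le)

theorem exists_df₁_add_div_eq (hs : Summable lam) (hnn : ∀ i, 0 ≤ lam i)
    (hinf : {i | 0 < lam i}.Infinite) {n : ℕ} (hn : 1 ≤ n) {δ : ℝ} (hδ : 0 ≤ δ) :
    ∃ κ, 0 < κ ∧ df₁ lam κ + δ / κ = n := by
  obtain ⟨a, ha, hna⟩ := exists_le_df₁ hs hnn hinf n
  set b := max a ((∑' i, lam i) + δ)
  have hab : a ≤ b := le_max_left _ _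
  have hb : 0 < b := ha.trans_le hab
  have hfb : df₁ lam b + δ / b ≤ n := calc
    df₁ lam b + δ / b ≤ ((∑' i, lam i) + δ) / b := by
      rw [add_div]; linarith [df₁_le hs hnn hb]
    _ ≤ 1 := (div_le_one hb).2 (le_max_right _ _)
    _ ≤ n := by exact_mod_cast hn
  have hfa : (n : ℝ) ≤ df₁ lam a + δ / a := by linarith [div_nonneg hδ ha.le]
  have hcont : ContinuousOn (fun κ => df₁ lam κ + δ / κ) (Icc a b) :=
    ((continuousOn_df₁ hs hnn ha).mono Icc_subset_Ici_self).add
      (continuousOn_const.div continuousOn_id fun x hx => (ha.trans_le hx.1).ne')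
  obtain ⟨κ, hκ, hκ_eq⟩ := intermediate_value_Icc' hab hcont ⟨hfb, hfa⟩
  exact ⟨κ, ha.trans_le hκ.1, hκ_eq⟩

theorem lt_of_df₁_add_div_eq (hs : Summable lam) (hnn : ∀ i, 0 ≤ lam i) {δ₁ δ₂ κ₁ κ₂ : ℝ}
    (hδ₂ : 0 ≤ δ₂) (hδ : δ₁ < δ₂) (hκ₁ : 0 < κ₁) (hκ₂ : 0 < κ₂)
    (h : df₁ lam κ₁ + δ₁ / κ₁ = df₁ lam κ₂ + δ₂ / κ₂) : κ₁ < κ₂ := by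
  by_contra! hle
  have h_df : df₁ lam κ₁ ≤ df₁ lam κ₂ := df₁_antitoneOn hs hnn hκ₂ hκ₁ hle
  have h_div : δ₂ / κ₁ ≤ δ₂ / κ₂ := div_le_div_of_nonneg_left hδ₂ hκ₂ hle
  have h_δ : δ₁ / κ₁ < δ₂ / κ₁ := div_lt_div_of_pos_right hδ hκ₁
  linarith

theorem df₂_antitoneOn (hs : Summable lam) (hnn : ∀ i, 0 ≤ lam i) :
    AntitoneOn (df₂ lam) (Ioi 0) := fun a ha b hb hab =>
  (summable_sq_div_add hs hnn hb).tsum_le_tsum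
    (fun i => pow_le_pow_left₀ (div_nonneg (hnn i) (by linarith [hnn i, mem_Ioi.1 hb]))
      (div_le_div_of_nonneg_left (hnn i) (by linarith [hnn i, mem_Ioi.1 ha]) (by linarith)) 2)
    (summable_sq_div_add hs hnn ha)

theorem df₂_lt_df₁ (hs : Summable lam) (hnn : ∀ i, 0 ≤ lam i) (hpos : ∃ i, 0 < lam i)
    {κ : ℝ} (hκ : 0 < κ) : df₂ lam κ < df₁ lam κ := by
  obtain ⟨j, hj⟩ := hpos
  refine (summable_sq_div_add hs hnn hκ).tsum_lt_tsum (i := j)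
    (fun i => sq_div_add_le_div_add (hnn i) hκ) ?_ (summable_div_add hs hnn hκ)
  have h₀ : 0 < lam j / (lam j + κ) := by positivity
  have h₁ : lam j / (lam j + κ) < 1 := (div_lt_one (by linarith)).2 (by linarith)
  nlinarith

end KernelRidge

open KernelRidge

theorem kappa_exists_unique_and_monotone_general
    (n : ℕ) (hn : 1 ≤ n)
    (lam : ℕ → ℝ) (hlam_nonneg : ∀ i, 0 ≤ lam i)
    (hlam_summable : Summable lam) (hlam_inf : {i : ℕ | 0 < lam i}.Infinite) :
    ∃ κ : ℝ → ℝ,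
      (∀ δ, 0 ≤ δ →
        (0 < κ δ ∧ ∑' i, lam i / (lam i + κ δ) + δ / κ δ = (n : ℝ)) ∧
        (∀ κ' : ℝ, 0 < κ' → ∑' i, lam i / (lam i + κ') + δ / κ' = (n : ℝ) →
          κ' = κ δ)) ∧
      StrictMonoOn κ (Set.Ici 0) ∧
      AntitoneOn (fun δ => ∑' i, (lam i / (lam i + κ δ)) ^ 2) (Set.Ici 0) ∧
      (∀ δ, 0 ≤ δ →
        (n : ℝ) / ((n : ℝ) - ∑' i, (lam i / (lam i + κ δ)) ^ 2) ≤
          (n : ℝ) / ((n : ℝ) - ∑' i, (lam i / (lam i + κ 0)) ^ 2)) := by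
  have hpos : ∃ i, 0 < lam i := hlam_inf.nonempty
  choose! κ hκ_pos hκ_eq using fun δ (hδ : 0 ≤ δ) =>
    exists_df₁_add_div_eq hlam_summable hlam_nonneg hlam_inf hn hδ
  have hκ_mono : StrictMonoOn κ (Ici 0) := fun δ₁ h₁ δ₂ h₂ hlt =>
    lt_of_df₁_add_div_eq hlam_summable hlam_nonneg h₂ hlt (hκ_pos δ₁ h₁) (hκ_pos δ₂ h₂)
      ((hκ_eq δ₁ h₁).trans (hκ_eq δ₂ h₂).symm)
  have hdf₂_anti : AntitoneOn (fun δ => df₂ lam (κ δ)) (Ici 0) := fun δ₁ h₁ δ₂ h₂ hle =>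
    df₂_antitoneOn hlam_summable hlam_nonneg (hκ_pos δ₁ h₁) (hκ_pos δ₂ h₂)
      (hκ_mono.monotoneOn h₁ h₂ hle)
  refine ⟨κ, fun δ hδ => ⟨⟨hκ_pos δ hδ, hκ_eq δ hδ⟩, fun κ' hκ' h => ?_⟩, hκ_mono, hdf₂_anti,
    fun δ hδ => ?_⟩
  · exact (df₁_add_div_strictAntiOn hlam_summable hlam_nonneg hpos hδ).injOn hκ' (hκ_pos δ hδ)
      (h.trans (hκ_eq δ hδ).symm)
  · have h₀ : df₂ lam (κ 0) < n := by
      have h_eq := hκ_eq 0 le_rfl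
      rw [zero_div, add_zero] at h_eq
      exact h_eq ▸ df₂_lt_df₁ hlam_summable hlam_nonneg hpos (hκ_pos 0 le_rfl)
    have hδ₀ : df₂ lam (κ δ) ≤ df₂ lam (κ 0) := hdf₂_anti self_mem_Ici hδ hδ
    show (n : ℝ) / (n - df₂ lam (κ δ)) ≤ n / (n - df₂ lam (κ 0))
    exact div_le_div_of_nonneg_left n.cast_nonneg (by linarith) (by linarith)

/-- For a nonincreasing summable nonnegative spectrum with
infinitely many positive eigenvalues, for every `δ ≥ 0` there is a unique
`κ_δ > 0` solving the self-consistent equation; `δ ↦ κ_δ` is strictly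
increasing on `[0, ∞)`; `δ ↦ Σ_i (λ_i/(λ_i + κ_δ))²` is nonincreasing; and
consequently `E_δ ≤ E_0` for every `δ ≥ 0`. -/
theorem kappa_exists_unique_and_monotone
    (n : ℕ) (hn : 1 ≤ n)
    (lam : ℕ → ℝ) (hlam_nonneg : ∀ i, 0 ≤ lam i) (hlam_mono : Antitone lam)
    (hlam_summable : Summable lam) (hlam_inf : {i : ℕ | 0 < lam i}.Infinite) :
    ∃ κ : ℝ → ℝ,
      (∀ δ, 0 ≤ δ →
        (0 < κ δ ∧ ∑' i, lam i / (lam i + κ δ) + δ / κ δ = (n : ℝ)) ∧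
        (∀ κ' : ℝ, 0 < κ' → ∑' i, lam i / (lam i + κ') + δ / κ' = (n : ℝ) →
          κ' = κ δ)) ∧
      StrictMonoOn κ (Set.Ici 0) ∧
      AntitoneOn (fun δ => ∑' i, (lam i / (lam i + κ δ)) ^ 2) (Set.Ici 0) ∧
      (∀ δ, 0 ≤ δ →
        (n : ℝ) / ((n : ℝ) - ∑' i, (lam i / (lam i + κ δ)) ^ 2) ≤
          (n : ℝ) / ((n : ℝ) - ∑' i, (lam i / (lam i + κ 0)) ^ 2)) :=
  kappa_exists_unique_and_monotone_general n hn lam hlam_nonneg hlam_summable hlam_inf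
end

section
/- Assume that for every n the index k_n (the least integer 0 ≤ k < n with n ≤ k + r_k^{(n)}) exists. Then E_0(n) → 1 as n → ∞ if and only if both k_n/n → 0 and n/R^{(n)}_{k_n} → 0 as n → ∞. -/
/-!
Write `s_i = λ_i / (λ_i + κ)`, so that `∑ s_i = n` and `E_0 = (1 - Q / n)⁻¹` with `Q = ∑ s_i ^ 2`;
hence `E_0 → 1` iff `Q / n → 0`, and it suffices to compare `Q / n` with `k / n` and
`n / R_k = n S_k / T_k ^ 2`, where `T_k` and `S_k` are the tail sums of `λ` and `λ ^ 2` from `k`.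

Minimality of `k` forces `λ_j > κ`, i.e. `s_j > 1/2`, for `j < k`, so `k ≤ 4 Q`. Both `(n - k) λ_k`
and `(n - k) κ` are at most `T_k`, and `λ_i ≤ s_i (λ_k + κ)` for `i ≥ k`, so `n / R_k ≤ 16 Q / n`
as soon as `2 k ≤ n`. Conversely, `T_k = ∑_{i ≥ k} (s_i λ_i + κ s_i)` and AM-GM give `T_k ≤ 4 κ n`
when `n / R_k ≤ 1/2`, whence `Q ≤ k + S_k / κ ^ 2 ≤ k + 16 n ^ 2 S_k / T_k ^ 2`.
-/

open Filter Finset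

section Tail

variable {f g : ℕ → ℝ}

lemma Summable.nat_add_left (hf : Summable f) (k : ℕ) : Summable fun i => f (k + i) := by
  simpa only [add_comm k] using (summable_nat_add_iff k).2 hf

lemma Summable.sum_range_add_tsum_nat_add_left (hf : Summable f) (k : ℕ) :
    ∑ i ∈ range k, f i + ∑' i, f (k + i) = ∑' i, f i := by
  simpa only [add_comm k] using hf.sum_add_tsum_nat_add k

lemma tsum_nat_add_left_le (hf : Summable f) (hf0 : ∀ i, 0 ≤ f i) (k : ℕ) :
    ∑' i, f (k + i) ≤ ∑' i, f i :=
  tsum_comp_le_tsum_of_inj hf hf0 (add_right_injective k)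

lemma tsum_le_add_tsum_nat_add_left (hf : Summable f) (hg : Summable g) (hf1 : ∀ i, f i ≤ 1)
    (hfg : ∀ i, f i ≤ g i) (j : ℕ) : ∑' i, f i ≤ j + ∑' i, g (j + i) := by
  rw [← hf.sum_range_add_tsum_nat_add_left j]
  refine add_le_add ?_ (Summable.tsum_le_tsum (fun i => hfg _) (hf.nat_add_left j)
    (hg.nat_add_left j))
  simpa using sum_le_card_nsmul (range j) f 1 fun i _ => hf1 i

lemma Summable.sq_of_nonneg (hf : Summable f) (hf0 : ∀ i, 0 ≤ f i) :
    Summable fun i => f i ^ 2 :=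
  .of_nonneg_of_le (fun i => sq_nonneg _)
    (fun i => by rw [sq]; exact mul_le_mul_of_nonneg_right (hf.le_tsum i fun j _ => hf0 j) (hf0 i))
    (hf.mul_left (∑' i, f i))

end Tail

section Spectrum

variable {lam : ℕ → ℝ} {κ : ℝ} {i : ℕ}

noncomputable def weight (lam : ℕ → ℝ) (κ : ℝ) (i : ℕ) : ℝ := lam i / (lam i + κ)

lemma weight_nonneg (hi : 0 ≤ lam i) (hκ : 0 < κ) : 0 ≤ weight lam κ i := by
  unfold weight; positivity

lemma weight_le_one (hi : 0 ≤ lam i) (hκ : 0 < κ) : weight lam κ i ≤ 1 :=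
  div_le_one_of_le₀ (by linarith) (by linarith)

lemma weight_le_div (hi : 0 ≤ lam i) (hκ : 0 < κ) : weight lam κ i ≤ lam i / κ :=
  div_le_div_of_nonneg_left hi hκ (by linarith)

lemma weight_mul_add (hi : 0 ≤ lam i) (hκ : 0 < κ) : weight lam κ i * (lam i + κ) = lam i :=
  div_mul_cancel₀ _ (by positivity)

lemma half_lt_weight (hκ : 0 < κ) (hi : κ < lam i) : 1 / 2 < weight lam κ i := by
  rw [weight, lt_div_iff₀ (by linarith)]; linarith

lemma sq_weight_le (hi : 0 ≤ lam i) (hκ : 0 < κ) : weight lam κ i ^ 2 ≤ weight lam κ i := by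
  simpa using pow_le_pow_of_le_one (weight_nonneg hi hκ) (weight_le_one hi hκ) one_le_two

lemma summable_weight (hlam : ∀ i, 0 ≤ lam i) (hκ : 0 < κ) (hsum : Summable lam) :
    Summable (weight lam κ) :=
  .of_nonneg_of_le (fun i => weight_nonneg (hlam i) hκ) (fun i => weight_le_div (hlam i) hκ)
    (hsum.div_const κ)

lemma summable_weight_sq (hlam : ∀ i, 0 ≤ lam i) (hκ : 0 < κ) (hsum : Summable lam) :
    Summable fun i => weight lam κ i ^ 2 :=
  .of_nonneg_of_le (fun _ => sq_nonneg _) (fun i => sq_weight_le (hlam i) hκ)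
    (summable_weight hlam hκ hsum)

lemma tsum_weight_le (hlam : ∀ i, 0 ≤ lam i) (hκ : 0 < κ) (hsum : Summable lam) (j : ℕ) :
    ∑' i, weight lam κ i ≤ j + (∑' i, lam (j + i)) / κ := by
  rw [← tsum_div_const]
  exact tsum_le_add_tsum_nat_add_left (summable_weight hlam hκ hsum) (hsum.div_const κ)
    (fun i => weight_le_one (hlam i) hκ) (fun i => weight_le_div (hlam i) hκ) j

lemma tsum_weight_sq_le (hlam : ∀ i, 0 ≤ lam i) (hκ : 0 < κ) (hsum : Summable lam) (j : ℕ) :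
    ∑' i, weight lam κ i ^ 2 ≤ j + (∑' i, lam (j + i) ^ 2) / κ ^ 2 := by
  rw [← tsum_div_const]
  refine tsum_le_add_tsum_nat_add_left (summable_weight_sq hlam hκ hsum)
    ((hsum.sq_of_nonneg hlam).div_const _) (fun i => ?_) (fun i => ?_) j
  · exact (sq_weight_le (hlam i) hκ).trans (weight_le_one (hlam i) hκ)
  · rw [← div_pow]
    exact pow_le_pow_left₀ (weight_nonneg (hlam i) hκ) (weight_le_div (hlam i) hκ) 2

lemma tsum_sq_nat_add_le (hlam : ∀ i, 0 ≤ lam i) (hanti : Antitone lam) (hκ : 0 < κ)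
    (hsum : Summable lam) (k : ℕ) :
    ∑' i, lam (k + i) ^ 2 ≤ (lam k + κ) ^ 2 * ∑' i, weight lam κ i ^ 2 := by
  have hw := summable_weight_sq hlam hκ hsum
  calc ∑' i, lam (k + i) ^ 2 ≤ ∑' i, (lam k + κ) ^ 2 * weight lam κ (k + i) ^ 2 := by
        refine Summable.tsum_le_tsum (fun i => ?_) ((hsum.sq_of_nonneg hlam).nat_add_left k)
          ((hw.nat_add_left k).mul_left _)
        have hw0 := weight_nonneg (hlam (k + i)) hκ
        have h : lam (k + i) ≤ (lam k + κ) * weight lam κ (k + i) := by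
          calc lam (k + i) = weight lam κ (k + i) * (lam (k + i) + κ) :=
                (weight_mul_add (hlam _) hκ).symm
            _ ≤ weight lam κ (k + i) * (lam k + κ) := by
                gcongr; exact hanti (Nat.le_add_right k i)
            _ = (lam k + κ) * weight lam κ (k + i) := mul_comm _ _
        rw [← mul_pow]
        exact pow_le_pow_left₀ (hlam _) h 2
    _ ≤ (lam k + κ) ^ 2 * ∑' i, weight lam κ i ^ 2 := by
        rw [tsum_mul_left]
        exact mul_le_mul_of_nonneg_left (tsum_nat_add_left_le hw (fun i => sq_nonneg _) k)
          (sq_nonneg _)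

/-- AM-GM on `weight i * lam i ≤ (t * weight i ^ 2 + lam i ^ 2 / t) / 2`, summed over the tail. -/
lemma tsum_nat_add_le (hlam : ∀ i, 0 ≤ lam i) (hκ : 0 < κ) (hsum : Summable lam) (k : ℕ)
    {t : ℝ} (ht : 0 < t) :
    ∑' i, lam (k + i) ≤
      (t * ∑' i, weight lam κ i + (∑' i, lam (k + i) ^ 2) / t) / 2 + κ * ∑' i, weight lam κ i := by
  have hw := summable_weight hlam hκ hsum
  have hsq := (hsum.sq_of_nonneg hlam).nat_add_left k
  have hpoint : ∀ i, lam (k + i) ≤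
      (t * weight lam κ (k + i) + lam (k + i) ^ 2 / t) / 2 + κ * weight lam κ (k + i) := by
    intro i
    set w := weight lam κ (k + i)
    set l := lam (k + i)
    have hamgm : w * l ≤ (t * w + l ^ 2 / t) / 2 := by
      have h1 := mul_le_mul_of_nonneg_left (sq_weight_le (hlam (k + i)) hκ) (sq_nonneg t)
      rw [show (t * w + l ^ 2 / t) / 2 = (t ^ 2 * w + l ^ 2) / (2 * t) by field_simp,
        le_div_iff₀ (by positivity)]
      nlinarith [sq_nonneg (t * w - l)]
    calc l = w * l + κ * w := by linear_combination -weight_mul_add (hlam (k + i)) hκ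
      _ ≤ _ := by gcongr
  have hW := tsum_nat_add_left_le hw (fun i => weight_nonneg (hlam i) hκ) k
  calc ∑' i, lam (k + i)
      ≤ (t * ∑' i, weight lam κ (k + i) + (∑' i, lam (k + i) ^ 2) / t) / 2 +
          κ * ∑' i, weight lam κ (k + i) :=
        hasSum_le hpoint (hsum.nat_add_left k).hasSum
          ((((hw.nat_add_left k).hasSum.mul_left t).add (hsq.hasSum.div_const t)).div_const 2
            |>.add ((hw.nat_add_left k).hasSum.mul_left κ))
    _ ≤ _ := by gcongr

/-- The paper's `r_k`, with `lam i` standing for `λ_{i+1}`. -/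
noncomputable def effRank (lam : ℕ → ℝ) (k : ℕ) : ℝ := (∑' i, lam (k + i)) / lam k

variable {n : ℝ} {k : ℕ}

lemma lt_of_not_le_add_effRank (hpos : ∀ i, 0 < lam i) (hκ : 0 < κ) (hsum : Summable lam)
    (hn : ∑' i, weight lam κ i = n) {j : ℕ} (hj : ¬ n ≤ j + effRank lam j) : κ < lam j := by
  by_contra! h
  refine hj ((hn ▸ tsum_weight_le (fun i => (hpos i).le) hκ hsum j).trans ?_)
  have : 0 ≤ ∑' i, lam (j + i) := tsum_nonneg fun i => (hpos _).le
  unfold effRank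
  gcongr
  exact hpos j

lemma le_four_mul_tsum_weight_sq (hpos : ∀ i, 0 < lam i) (hκ : 0 < κ) (hsum : Summable lam)
    (hn : ∑' i, weight lam κ i = n) (hmin : ∀ j < k, ¬ n ≤ j + effRank lam j) :
    (k : ℝ) ≤ 4 * ∑' i, weight lam κ i ^ 2 := by
  have hhead : ∀ j ∈ range k, 1 / 4 ≤ weight lam κ j ^ 2 := fun j hj => by
    have := half_lt_weight hκ (lt_of_not_le_add_effRank hpos hκ hsum hn (hmin j (mem_range.1 hj)))
    nlinarith
  have h1 := card_nsmul_le_sum _ _ _ hhead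
  have h2 := (summable_weight_sq (fun i => (hpos i).le) hκ hsum).sum_le_tsum (range k)
    (fun i _ => sq_nonneg _)
  simp only [card_range, nsmul_eq_mul] at h1
  linarith

lemma tsum_weight_pos (hpos : ∀ i, 0 < lam i) (hκ : 0 < κ) (hsum : Summable lam) :
    0 < ∑' i, weight lam κ i :=
  (summable_weight (fun i => (hpos i).le) hκ hsum).tsum_pos
    (fun i => weight_nonneg (hpos i).le hκ) 0 (by unfold weight; have := hpos 0; positivity)

lemma mul_tsum_sq_div_sq_le (hpos : ∀ i, 0 < lam i) (hanti : Antitone lam) (hκ : 0 < κ)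
    (hsum : Summable lam) (hn : ∑' i, weight lam κ i = n) (hk : n ≤ k + effRank lam k)
    (h2k : 2 * k ≤ n) :
    n * (∑' i, lam (k + i) ^ 2) / (∑' i, lam (k + i)) ^ 2 ≤
      16 * ((∑' i, weight lam κ i ^ 2) / n) := by
  have hlam := fun i => (hpos i).le
  have hn0 : 0 < n := hn ▸ tsum_weight_pos hpos hκ hsum
  set T := ∑' i, lam (k + i)
  have hT : 0 < T := (hsum.nat_add_left k).tsum_pos (fun i => hlam _) 0 (hpos _)
  have hlamk : (n - k) * lam k ≤ T := by
    unfold effRank at hk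
    rw [← le_div_iff₀ (hpos k)]; linarith
  have hκk : (n - k) * κ ≤ T := by
    have := hn ▸ tsum_weight_le hlam hκ hsum k
    rw [← le_div_iff₀ hκ]; linarith
  have hnT : n * (lam k + κ) ≤ 4 * T := by nlinarith [hpos k]
  have hS := tsum_sq_nat_add_le hlam hanti hκ hsum k
  rw [div_le_iff₀ (by positivity), mul_div_assoc', div_mul_eq_mul_div, le_div_iff₀ hn0]
  calc n * (∑' i, lam (k + i) ^ 2) * n = n ^ 2 * ∑' i, lam (k + i) ^ 2 := by ring
    _ ≤ n ^ 2 * ((lam k + κ) ^ 2 * ∑' i, weight lam κ i ^ 2) := by gcongr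
    _ = (n * (lam k + κ)) ^ 2 * ∑' i, weight lam κ i ^ 2 := by ring
    _ ≤ (4 * T) ^ 2 * ∑' i, weight lam κ i ^ 2 := by
        gcongr
        exact mul_nonneg hn0.le (by linarith [hpos k])
    _ = 16 * (∑' i, weight lam κ i ^ 2) * T ^ 2 := by ring

lemma tsum_weight_sq_div_le (hpos : ∀ i, 0 < lam i) (hκ : 0 < κ) (hsum : Summable lam)
    (hn : ∑' i, weight lam κ i = n)
    (hsmall : n * (∑' i, lam (k + i) ^ 2) / (∑' i, lam (k + i)) ^ 2 ≤ 1 / 2) :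
    (∑' i, weight lam κ i ^ 2) / n ≤
      k / n + 16 * (n * (∑' i, lam (k + i) ^ 2) / (∑' i, lam (k + i)) ^ 2) := by
  have hlam := fun i => (hpos i).le
  have hn0 : 0 < n := hn ▸ tsum_weight_pos hpos hκ hsum
  have hT : 0 < ∑' i, lam (k + i) :=
    (hsum.nat_add_left k).tsum_pos (fun i => hlam _) 0 (hpos _)
  have h := hn ▸ tsum_nat_add_le hlam hκ hsum k (div_pos hT hn0)
  have hQ := tsum_weight_sq_le hlam hκ hsum k
  set T := ∑' i, lam (k + i)
  set S := ∑' i, lam (k + i) ^ 2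
  have hS : 0 ≤ S := tsum_nonneg fun i => sq_nonneg _
  have hTκ : T ≤ 4 * κ * n := by
    rw [div_mul_cancel₀ _ hn0.ne', div_div_eq_mul_div] at h
    have : S * n / T ≤ T / 2 := by
      rw [div_le_iff₀ hT]
      rw [div_le_iff₀ (by positivity)] at hsmall
      linarith
    linarith
  have hSκ : S / κ ^ 2 ≤ 16 * n * (n * S / T ^ 2) :=
    calc S / κ ^ 2 = 16 * n ^ 2 * S / (4 * κ * n) ^ 2 := by field_simp; ring
      _ ≤ 16 * n ^ 2 * S / T ^ 2 := by gcongr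
      _ = 16 * n * (n * S / T ^ 2) := by ring
  rw [div_le_iff₀ hn0, add_mul, div_mul_cancel₀ _ hn0.ne']
  linarith

end Spectrum

section Limits

variable {α 𝕜 : Type*} [NormedField 𝕜] {l : Filter α}

lemma tendsto_inv_one_sub_iff {a : α → 𝕜} :
    Tendsto (fun x => (1 - a x)⁻¹) l (nhds 1) ↔ Tendsto a l (nhds 0) := by
  refine ⟨fun h => ?_, fun h => ?_⟩
  · have h' := h.inv₀ one_ne_zero
    simp only [inv_inv, inv_one] at h'
    simpa using (tendsto_const_nhds (x := (1 : 𝕜))).sub h'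
  · simpa using ((tendsto_const_nhds (x := (1 : 𝕜))).sub h).inv₀ (by simp)

lemma tendsto_zero_iff_of_le {a b c : α → ℝ} {C ε : ℝ} (hε : 0 < ε)
    (ha : ∀ᶠ x in l, 0 ≤ a x) (hb : ∀ᶠ x in l, 0 ≤ b x) (hc : ∀ᶠ x in l, 0 ≤ c x)
    (hba : ∀ᶠ x in l, b x ≤ C * a x) (hca : ∀ᶠ x in l, b x ≤ ε → c x ≤ C * a x)
    (hab : ∀ᶠ x in l, c x ≤ ε → a x ≤ b x + C * c x) :
    Tendsto a l (nhds 0) ↔ Tendsto b l (nhds 0) ∧ Tendsto c l (nhds 0) := by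
  refine ⟨fun ha0 => ?_, fun ⟨hb0, hc0⟩ => ?_⟩
  · have hCa : Tendsto (fun x => C * a x) l (nhds 0) := by simpa using ha0.const_mul C
    have hb0 := squeeze_zero' hb hba hCa
    refine ⟨hb0, squeeze_zero' hc ?_ hCa⟩
    filter_upwards [hca, hb0.eventually (eventually_le_nhds hε)] with x h h' using h h'
  · refine squeeze_zero' ha ?_ (by simpa using hb0.add (hc0.const_mul C))
    filter_upwards [hab, hc0.eventually (eventually_le_nhds hε)] with x h h' using h h'

end Limits

/-- With a spectrum `λ^{(n)}` possibly changing with `n`, and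
`k_n` the least integer `0 ≤ k < n` with `n ≤ k + r_k^{(n)}` (assumed to
exist), we have `E_0(n) → 1` iff `k_n/n → 0` and `n/R^{(n)}_{k_n} → 0`.
(Here `lam n i` denotes `λ^{(n)}_{i+1}`.) -/
theorem benign_overfitting_iff
    (lam : ℕ → ℕ → ℝ)
    (hlam_pos : ∀ n, 1 ≤ n → ∀ i, 0 < lam n i)
    (hlam_mono : ∀ n, 1 ≤ n → Antitone (lam n))
    (hlam_summable : ∀ n, 1 ≤ n → Summable (lam n))
    (κ : ℕ → ℝ) (hκ_pos : ∀ n, 1 ≤ n → 0 < κ n)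
    (hκ_eq : ∀ n, 1 ≤ n → ∑' i, lam n i / (lam n i + κ n) = (n : ℝ))
    (E : ℕ → ℝ)
    (hE : ∀ n, E n = (n : ℝ) / ((n : ℝ) - ∑' i, (lam n i / (lam n i + κ n)) ^ 2))
    (r : ℕ → ℕ → ℝ) (hr : ∀ n j, r n j = (∑' i, lam n (j + i)) / lam n j)
    (R : ℕ → ℕ → ℝ)
    (hR : ∀ n j, R n j = (∑' i, lam n (j + i)) ^ 2 / ∑' i, lam n (j + i) ^ 2)
    (kn : ℕ → ℕ)
    (hkn : ∀ n, 1 ≤ n → kn n < n ∧ (n : ℝ) ≤ (kn n : ℝ) + r n (kn n) ∧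
      ∀ j, j < kn n → ¬((n : ℝ) ≤ (j : ℝ) + r n j)) :
    Filter.Tendsto E Filter.atTop (nhds 1) ↔
      (Filter.Tendsto (fun n : ℕ => (kn n : ℝ) / n) Filter.atTop (nhds 0) ∧
        Filter.Tendsto (fun n : ℕ => (n : ℝ) / R n (kn n)) Filter.atTop (nhds 0)) := by
  have hEA : ∀ᶠ n in atTop, (1 - (∑' i, weight (lam n) (κ n) i ^ 2) / n)⁻¹ = E n := by
    filter_upwards [eventually_ge_atTop 1] with n hn
    rw [hE, one_sub_div (by positivity), inv_div]
    rfl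
  have hD : ∀ n j : ℕ, (n : ℝ) / R n j =
      n * (∑' i, lam n (j + i) ^ 2) / (∑' i, lam n (j + i)) ^ 2 := fun n j => by
    rw [hR, div_div_eq_mul_div]
  have hkn' : ∀ n : ℕ, 1 ≤ n → (n : ℝ) ≤ kn n + effRank (lam n) (kn n) ∧
      ∀ j < kn n, ¬ (n : ℝ) ≤ j + effRank (lam n) j := fun n hn => by
    simpa only [hr, effRank] using (hkn n hn).2
  rw [← tendsto_congr' hEA, tendsto_inv_one_sub_iff]
  simp_rw [hD]
  refine tendsto_zero_iff_of_le (C := 16) (ε := 1 / 2) one_half_pos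
    (.of_forall fun n => by positivity) (.of_forall fun n => by positivity)
    (.of_forall fun n => by positivity) ?_ ?_ ?_ <;>
    filter_upwards [eventually_ge_atTop 1] with n hn
  · have hk := le_four_mul_tsum_weight_sq (hlam_pos n hn) (hκ_pos n hn) (hlam_summable n hn)
      (hκ_eq n hn) (hkn' n hn).2
    have hQ : 0 ≤ ∑' i, weight (lam n) (κ n) i ^ 2 := tsum_nonneg fun i => sq_nonneg _
    rw [mul_div_assoc']
    gcongr
    linarith
  · intro hk
    have hn0 : (0 : ℝ) < n := by exact_mod_cast hn
    rw [div_le_iff₀ hn0] at hk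
    exact mul_tsum_sq_div_sq_le (hlam_pos n hn) (hlam_mono n hn) (hκ_pos n hn)
      (hlam_summable n hn) (hκ_eq n hn) (hkn' n hn).1 (by linarith)
  · exact tsum_weight_sq_div_le (hlam_pos n hn) (hκ_pos n hn) (hlam_summable n hn) (hκ_eq n hn)
end

section
/- If lim_{k→∞} k/r_k = 0, then overfitting is benign: lim_{n→∞} E_0(n) = 1. -/
/-!
Write `s_i = λ_i / (λ_i + κ)`, so that `∑ s_i = n` and `E_0(n) = 1 / (1 - ∑ s_i² / n)`.
Since `s` is antitone with values in `[0, 1]`, splitting the sum of squares at any `k` gives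
`∑ s_i² ≤ k + s_k n`; and since `λ_i / (λ_k + κ) ≤ s_i` for `i ≥ k`, summing the tail gives
`s_k r_k ≤ n`. Hence `∑ s_i² / n ≤ k / n + n / r_k` for every `k`. Taking `k ≈ ε n`, the right
side is at most `2ε + (k / r_k) / ε`, which is small because `k / r_k → 0`.
-/

open Filter Topology

noncomputable def effectiveRank (lam : ℕ → ℝ) (k : ℕ) : ℝ :=
  (∑' i, lam (k + i)) / lam k

theorem tsum_sq_le_of_antitone {s : ℕ → ℝ} (hs : Antitone s) (hs0 : ∀ i, 0 ≤ s i)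
    (hs1 : ∀ i, s i ≤ 1) (hsum : Summable s) (k : ℕ) :
    ∑' i, s i ^ 2 ≤ k + s k * ∑' i, s i := by
  have hsq : Summable fun i => s i ^ 2 :=
    hsum.of_nonneg_of_le (fun i => sq_nonneg _) fun i => by nlinarith [hs0 i, hs1 i]
  have head : ∑ i ∈ Finset.range k, s i ^ 2 ≤ k :=
    calc ∑ i ∈ Finset.range k, s i ^ 2 ≤ ∑ _i ∈ Finset.range k, (1 : ℝ) :=
          Finset.sum_le_sum fun i _ => by nlinarith [hs0 i, hs1 i]
      _ = k := by simp
  have tail : ∑' i, s (i + k) ^ 2 ≤ s k * ∑' i, s i :=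
    calc ∑' i, s (i + k) ^ 2 ≤ ∑' i, s k * s (i + k) :=
          ((summable_nat_add_iff k).2 hsq).tsum_le_tsum
            (fun i => by
              rw [sq]
              exact mul_le_mul_of_nonneg_right (hs (Nat.le_add_left k i)) (hs0 _))
            (((summable_nat_add_iff k).2 hsum).mul_left _)
      _ = s k * ∑' i, s (i + k) := tsum_mul_left
      _ ≤ s k * ∑' i, s i :=
          mul_le_mul_of_nonneg_left (tsum_comp_le_tsum_of_inj hsum hs0 (add_left_injective k))
            (hs0 k)
  rw [← hsq.sum_add_tsum_nat_add k]
  exact add_le_add head tail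

theorem tendsto_zero_of_le_div_add_div {q r : ℕ → ℝ} (hq0 : ∀ n, 0 ≤ q n)
    (hq : ∀ n, 1 ≤ n → ∀ k, q n ≤ k / n + n / r k)
    (h : Tendsto (fun k : ℕ => (k : ℝ) / r k) atTop (𝓝 0)) : Tendsto q atTop (𝓝 0) := by
  refine tendsto_order.2 ⟨fun a ha => .of_forall fun n => ha.trans_le (hq0 n), fun ε hε => ?_⟩
  set δ := ε / 3 with hδ_def
  have hδ : 0 < δ := by positivity
  have hk : Tendsto (fun n : ℕ => ⌈δ * n⌉₊) atTop atTop :=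
    tendsto_nat_ceil_atTop.comp (tendsto_natCast_atTop_atTop.const_mul_atTop hδ)
  filter_upwards [(h.comp hk).eventually (gt_mem_nhds (pow_pos hδ 2)),
    tendsto_natCast_atTop_atTop.eventually_ge_atTop δ⁻¹, eventually_ge_atTop 1]
    with n hkr hnδ hn
  set k := ⌈δ * n⌉₊
  have hδn : 1 ≤ δ * n := by rwa [inv_le_iff_one_le_mul₀' hδ] at hnδ
  have hk_ge : δ * n ≤ k := Nat.le_ceil _
  have hk_lt : (k : ℝ) < δ * n + 1 := Nat.ceil_lt_add_one (by positivity)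
  have hk_pos : (0 : ℝ) < k := by linarith
  have hn_pos : (0 : ℝ) < n := by exact_mod_cast hn
  have head : (k : ℝ) / n < 2 * δ := by
    rw [div_lt_iff₀ hn_pos]
    linarith
  have tail : (n : ℝ) / r k ≤ δ :=
    calc (n : ℝ) / r k = n / k * (k / r k) := (div_mul_div_cancel₀ hk_pos.ne').symm
      _ ≤ n / k * δ ^ 2 := mul_le_mul_of_nonneg_left hkr.le (by positivity)
      _ ≤ δ := by
          rw [div_mul_eq_mul_div, div_le_iff₀ hk_pos]
          nlinarith
  linarith [hq n hn k, hδ_def]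

section RidgeWeights

variable {lam : ℕ → ℝ} {c : ℝ}

theorem antitone_div_add (hlam : ∀ i, 0 ≤ lam i) (hanti : Antitone lam) (hc : 0 < c) :
    Antitone fun i => lam i / (lam i + c) := by
  intro i j hij
  have hle := hanti hij
  rw [div_le_div_iff₀ (by linarith [hlam j]) (by linarith [hlam i])]
  nlinarith

theorem summable_div_add (hlam : ∀ i, 0 ≤ lam i) (hsum : Summable lam) (hc : 0 < c) :
    Summable fun i => lam i / (lam i + c) :=
  (hsum.div_const c).of_nonneg_of_le (fun i => div_nonneg (hlam i) (by linarith [hlam i]))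
    fun i => div_le_div_of_nonneg_left (hlam i) hc (by linarith [hlam i])

theorem effectiveRank_pos (hlam : ∀ i, 0 < lam i) (hsum : Summable lam) (k : ℕ) :
    0 < effectiveRank lam k := by
  have htail : Summable fun i => lam (k + i) := hsum.comp_injective (add_right_injective k)
  exact div_pos (htail.tsum_pos (fun i => (hlam _).le) 0 (hlam _)) (hlam k)

theorem div_add_mul_effectiveRank_le (hlam : ∀ i, 0 < lam i) (hanti : Antitone lam)
    (hsum : Summable lam) (hc : 0 < c) (k : ℕ) :
    lam k / (lam k + c) * effectiveRank lam k ≤ ∑' i, lam i / (lam i + c) := by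
  have hs := summable_div_add (fun i => (hlam i).le) hsum hc
  calc lam k / (lam k + c) * effectiveRank lam k = ∑' i, lam (k + i) / (lam k + c) := by
        rw [effectiveRank, tsum_div_const]
        field_simp [(hlam k).ne']
    _ ≤ ∑' i, lam (k + i) / (lam (k + i) + c) :=
        ((hsum.comp_injective (add_right_injective k)).div_const _).tsum_le_tsum
          (fun i => div_le_div_of_nonneg_left (hlam _).le (by linarith [hlam (k + i)])
            (by linarith [hanti (Nat.le_add_right k i)]))
          (hs.comp_injective (add_right_injective k))
    _ ≤ ∑' i, lam i / (lam i + c) :=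
        tsum_comp_le_tsum_of_inj hs (fun i => div_nonneg (hlam i).le (by linarith [hlam i]))
          (add_right_injective k)

theorem tsum_sq_div_add_div_tsum_le (hlam : ∀ i, 0 < lam i) (hanti : Antitone lam)
    (hsum : Summable lam) (hc : 0 < c) (k : ℕ) :
    (∑' i, (lam i / (lam i + c)) ^ 2) / ∑' i, lam i / (lam i + c) ≤
      k / ∑' i, lam i / (lam i + c) + (∑' i, lam i / (lam i + c)) / effectiveRank lam k := by
  set s := fun i => lam i / (lam i + c)
  have hs0 : ∀ i, 0 ≤ s i := fun i => div_nonneg (hlam i).le (by linarith [hlam i])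
  have hs1 : ∀ i, s i ≤ 1 := fun i => div_le_one_of_le₀ (by linarith) (by linarith [hlam i])
  have hs := summable_div_add (fun i => (hlam i).le) hsum hc
  have hN : 0 < ∑' i, s i := hs.tsum_pos hs0 0 (div_pos (hlam 0) (by linarith [hlam 0]))
  have hsk : s k ≤ (∑' i, s i) / effectiveRank lam k :=
    (le_div_iff₀ (effectiveRank_pos hlam hsum k)).2
      (div_add_mul_effectiveRank_le hlam hanti hsum hc k)
  have hsq := tsum_sq_le_of_antitone (antitone_div_add (fun i => (hlam i).le) hanti hc)
    hs0 hs1 hs k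
  rw [div_add' _ _ _ hN.ne', div_le_div_iff_of_pos_right hN]
  nlinarith

end RidgeWeights

/-- If `lim_{k→∞} k/r_k = 0` then overfitting is benign:
`lim_{n→∞} E_0(n) = 1`. (Here `lam i` denotes `λ_{i+1}`, the spectrum being
fixed as `n` increases.) -/
theorem benign_overfitting_of_k_div_rk_tendsto_zero
    (lam : ℕ → ℝ) (hlam_pos : ∀ i, 0 < lam i) (hlam_mono : Antitone lam)
    (hlam_summable : Summable lam)
    (κ : ℕ → ℝ) (hκ_pos : ∀ n, 1 ≤ n → 0 < κ n)
    (hκ_eq : ∀ n : ℕ, 1 ≤ n → ∑' i, lam i / (lam i + κ n) = (n : ℝ))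
    (E : ℕ → ℝ)
    (hE : ∀ n : ℕ, E n = (n : ℝ) / ((n : ℝ) - ∑' i, (lam i / (lam i + κ n)) ^ 2))
    (r : ℕ → ℝ) (hr : ∀ j, r j = (∑' i, lam (j + i)) / lam j)
    (h : Filter.Tendsto (fun k : ℕ => (k : ℝ) / r k) Filter.atTop (nhds 0)) :
    Filter.Tendsto E Filter.atTop (nhds 1) := by
  obtain rfl : r = effectiveRank lam := funext hr
  set q := fun n : ℕ => (∑' i, (lam i / (lam i + κ n)) ^ 2) / n
  have hq : ∀ n, 1 ≤ n → ∀ k, q n ≤ k / n + n / effectiveRank lam k := fun n hn k => by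
    simpa only [hκ_eq n hn] using
      tsum_sq_div_add_div_tsum_le hlam_pos hlam_mono hlam_summable (hκ_pos n hn) k
  have hq0 : ∀ n, 0 ≤ q n := fun n =>
    div_nonneg (tsum_nonneg fun _ => sq_nonneg _) n.cast_nonneg
  have hEq : ∀ᶠ n in atTop, (1 - q n)⁻¹ = E n := by
    filter_upwards [eventually_ge_atTop 1] with n hn
    rw [hE, one_sub_div (by positivity), inv_div]
  have hq_lim := tendsto_zero_of_le_div_add_div hq0 hq h
  simpa using ((tendsto_const_nhds.sub hq_lim).inv₀ (by norm_num)).congr' hEq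
end

section
/- (Lower bounds on the effective regularization.) For any integer k ≥ 0 with λ_{k+1} > 0, the ridgeless effective regularization satisfies both κ_0 ≥ (1 − n/R_k) · (Σ_{i>k} λ_i)/n and κ_0 ≥ λ_{k+1} · ((k + r_k)/n − 1). -/
/-!
Write `T = ∑_{i>k} λ_i`. For the second bound, `(λ_{k+1} + κ₀) · λ_i / (λ_i + κ₀) ≥ min λ_{k+1} λ_i`
termwise, and summing over `i` gives `(λ_{k+1} + κ₀) n ≥ k λ_{k+1} + T`.
For the first, Cauchy–Schwarz gives
`T² ≤ (∑_{i>k} λ_i / (λ_i + κ₀)) · ∑_{i>k} λ_i (λ_i + κ₀) ≤ n (∑_{i>k} λ_i² + κ₀ T)`;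
it is obtained by summing the AM–GM inequality `2 t λ ≤ t² λ / (λ + κ₀) + λ (λ + κ₀)` with `t = T / n`.
-/

open Finset

section

variable {ι : Type*} {κ : ℝ}

lemma min_le_add_mul_div_add {a b : ℝ} (hb : 0 ≤ b) (hκ : 0 < κ) :
    min a b ≤ (a + κ) * (b / (b + κ)) := by
  rw [mul_div_assoc', le_div_iff₀ (by linarith)]
  rcases min_cases a b with ⟨hmin, hab⟩ | ⟨hmin, hba⟩ <;> rw [hmin] <;> nlinarith

lemma two_mul_mul_le_sq_mul_div_add_add_mul {a : ℝ} (t : ℝ) (ha : 0 ≤ a) (hκ : 0 < κ) :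
    2 * t * a ≤ t ^ 2 * (a / (a + κ)) + a * (a + κ) := by
  have hpos : 0 < a + κ := by linarith
  rw [mul_div_assoc', div_add' _ _ _ hpos.ne', le_div_iff₀ hpos]
  nlinarith [mul_nonneg ha (sq_nonneg (t - (a + κ)))]

lemma summable_div_add_s13 {g : ι → ℝ} (hg : ∀ i, 0 ≤ g i) (hgs : Summable g) (hκ : 0 < κ) :
    Summable fun i => g i / (g i + κ) :=
  (hgs.div_const κ).of_nonneg_of_le (fun i => div_nonneg (hg i) (by linarith [hg i]))
    fun i => div_le_div_of_nonneg_left (hg i) hκ (by linarith [hg i])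

lemma sq_tsum_le_mul_of_tsum_div_add_le {g : ι → ℝ} {m : ℝ} (hg : ∀ i, 0 ≤ g i)
    (hgs : Summable g) (hg2 : Summable fun i => g i ^ 2) (hκ : 0 < κ) (hm : 0 < m)
    (h : ∑' i, g i / (g i + κ) ≤ m) :
    (∑' i, g i) ^ 2 ≤ m * (∑' i, g i ^ 2 + κ * ∑' i, g i) := by
  set T := ∑' i, g i
  have hdiv := summable_div_add_s13 hg hgs hκ
  have hprod : Summable fun i => g i * (g i + κ) :=
    (hg2.add (hgs.mul_left κ)).congr fun i => by ring
  have key : 2 * (T / m) * T ≤ (T / m) ^ 2 * ∑' i, g i / (g i + κ) + ∑' i, g i * (g i + κ) := by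
    rw [← tsum_mul_left, ← tsum_mul_left, ← (hdiv.mul_left _).tsum_add hprod]
    exact (hgs.mul_left _).tsum_le_tsum
      (fun i => two_mul_mul_le_sq_mul_div_add_add_mul _ (hg i) hκ) ((hdiv.mul_left _).add hprod)
  have hsplit : ∑' i, g i * (g i + κ) = ∑' i, g i ^ 2 + κ * T := by
    rw [← tsum_mul_left, ← hg2.tsum_add (hgs.mul_left κ)]
    exact tsum_congr fun i => by ring
  have hle : (T / m) ^ 2 * ∑' i, g i / (g i + κ) ≤ (T / m) ^ 2 * m :=
    mul_le_mul_of_nonneg_left h (sq_nonneg _)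
  rw [hsplit] at key
  have : T ^ 2 / m ≤ ∑' i, g i ^ 2 + κ * T := by
    have e1 : 2 * (T / m) * T = 2 * (T ^ 2 / m) := by ring
    have e2 : (T / m) ^ 2 * m = T ^ 2 / m := by field_simp
    linarith
  rwa [div_le_iff₀ hm, mul_comm] at this

end

section

variable {lam : ℕ → ℝ} {κ : ℝ}

lemma nat_mul_add_tsum_le_mul_tsum_div_add (hlam : ∀ i, 0 ≤ lam i) (hmono : Antitone lam)
    (hs : Summable lam) (hκ : 0 < κ) (k : ℕ) :
    k * lam k + ∑' i, lam (k + i) ≤ (lam k + κ) * ∑' i, lam i / (lam i + κ) := by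
  have hdiv := (summable_div_add_s13 hlam hs hκ).mul_left (lam k + κ)
  have htail : Summable fun i => lam (k + i) := by
    simpa only [add_comm k] using (summable_nat_add_iff k).2 hs
  rw [← tsum_mul_left, ← hdiv.sum_add_tsum_nat_add k]
  gcongr ?_ + ?_
  · calc (k : ℝ) * lam k = ∑ _i ∈ range k, lam k := by simp
      _ ≤ _ := sum_le_sum fun i hi => by
        have h := min_le_add_mul_div_add (a := lam k) (hlam i) hκ
        rwa [min_eq_left (hmono (mem_range.1 hi).le)] at h
  · simp only [add_comm _ k]
    refine htail.tsum_le_tsum (fun i => ?_) ?_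
    · have h := min_le_add_mul_div_add (a := lam k) (hlam (k + i)) hκ
      rwa [min_eq_right (hmono (k.le_add_right i))] at h
    · simpa only [add_comm _ k] using (summable_nat_add_iff k).2 hdiv

end

theorem kappa_lower_bounds_general
    (n : ℕ) (hn : 1 ≤ n)
    (lam : ℕ → ℝ) (hlam_nonneg : ∀ i, 0 ≤ lam i) (hlam_mono : Antitone lam)
    (hlam_summable : Summable lam)
    (κ0 : ℝ) (hκ0 : 0 < κ0)
    (hκ0_eq : ∑' i, lam i / (lam i + κ0) = (n : ℝ))
    (k : ℕ) (hlamk : 0 < lam k)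
    (r : ℕ → ℝ) (hr : ∀ j, r j = (∑' i, lam (j + i)) / lam j)
    (R : ℕ → ℝ) (hR : ∀ j, R j = (∑' i, lam (j + i)) ^ 2 / ∑' i, lam (j + i) ^ 2) :
    (1 - (n : ℝ) / R k) * (∑' i, lam (k + i)) / n ≤ κ0 ∧
      lam k * (((k : ℝ) + r k) / n - 1) ≤ κ0 := by
  have hn' : (0 : ℝ) < n := by exact_mod_cast hn
  have htail : Summable fun i => lam (k + i) := by
    simpa only [add_comm k] using (summable_nat_add_iff k).2 hlam_summable
  constructor
  · have hT : lam k ≤ ∑' i, lam (k + i) := by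
      simpa using htail.le_tsum 0 fun i _ => hlam_nonneg (k + i)
    have htail_sq : Summable fun i => lam (k + i) ^ 2 :=
      (htail.mul_left (lam k)).of_nonneg_of_le (fun i => sq_nonneg _) fun i => by
        rw [sq]; exact mul_le_mul_of_nonneg_right (hlam_mono (k.le_add_right i)) (hlam_nonneg _)
    have hN : ∑' i, lam (k + i) / (lam (k + i) + κ0) ≤ n :=
      hκ0_eq ▸ tsum_comp_le_tsum_of_inj (summable_div_add_s13 hlam_nonneg hlam_summable hκ0)
        (fun i => div_nonneg (hlam_nonneg i) (by linarith [hlam_nonneg i])) (add_right_injective k)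
    have hCS := sq_tsum_le_mul_of_tsum_div_add_le (fun i => hlam_nonneg (k + i)) htail htail_sq
      hκ0 hn' hN
    rw [hR k, div_div_eq_mul_div]
    generalize ∑' i, lam (k + i) = T at hT hCS ⊢
    generalize ∑' i, lam (k + i) ^ 2 = S at hCS ⊢
    have hT0 : 0 < T := hlamk.trans_le hT
    field_simp
    linarith
  · have h := nat_mul_add_tsum_le_mul_tsum_div_add hlam_nonneg hlam_mono hlam_summable hκ0 k
    rw [hκ0_eq] at h
    rw [hr k]
    generalize ∑' i, lam (k + i) = T at h ⊢
    field_simp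
    linarith

/-- Lower bounds on the effective regularization: For any
`k ≥ 0` with `λ_{k+1} > 0`,
`κ_0 ≥ (1 − n/R_k)·(Σ_{i>k} λ_i)/n` and `κ_0 ≥ λ_{k+1}·((k + r_k)/n − 1)`.
(Here `lam i` denotes `λ_{i+1}`.) -/
theorem kappa_lower_bounds
    (n : ℕ) (hn : 1 ≤ n)
    (lam : ℕ → ℝ) (hlam_nonneg : ∀ i, 0 ≤ lam i) (hlam_mono : Antitone lam)
    (hlam_summable : Summable lam) (hlam_ne : ∃ i, lam i ≠ 0)
    (κ0 : ℝ) (hκ0 : 0 < κ0)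
    (hκ0_eq : ∑' i, lam i / (lam i + κ0) = (n : ℝ))
    (k : ℕ) (hlamk : 0 < lam k)
    (r : ℕ → ℝ) (hr : ∀ j, r j = (∑' i, lam (j + i)) / lam j)
    (R : ℕ → ℝ) (hR : ∀ j, R j = (∑' i, lam (j + i)) ^ 2 / ∑' i, lam (j + i) ^ 2) :
    (1 - (n : ℝ) / R k) * (∑' i, lam (k + i)) / n ≤ κ0 ∧
      lam k * (((k : ℝ) + r k) / n - 1) ≤ κ0 :=
  kappa_lower_bounds_general n hn lam hlam_nonneg hlam_mono hlam_summable κ0 hκ0 hκ0_eq k hlamk r hr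
    R hR
end

section
/- (Upper bound on the effective regularization.) For any integer k with 0 ≤ k < n, the ridgeless effective regularization satisfies the strict inequality κ_0 < (1 − k/n)^{−1} · (Σ_{i>k} λ_i)/n. -/
/-!
Split `n = ∑ λᵢ / (λᵢ + κ₀)` after the first `k` terms. Each head term is at most `1`, and each
tail term is at most `λᵢ / κ₀`, strictly so when `λᵢ > 0`. Some tail term is positive, since
otherwise `n ≤ k`; hence `n - k < (∑_{i>k} λᵢ) / κ₀`.
-/

open Finset

section DivAddConst

variable {ι : Type*} {a : ι → ℝ} {κ : ℝ}

lemma summable_div_add_const (ha : ∀ i, 0 ≤ a i) (hκ : 0 < κ) (hs : Summable a) :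
    Summable fun i => a i / (a i + κ) :=
  (hs.div_const κ).of_nonneg_of_le (fun i => by have := ha i; positivity)
    fun i => div_le_div_of_nonneg_left (ha i) hκ (le_add_of_nonneg_left (ha i))

lemma sum_div_add_const_le_card (ha : ∀ i, 0 ≤ a i) (hκ : 0 < κ) (s : Finset ι) :
    ∑ i ∈ s, a i / (a i + κ) ≤ #s := by
  simpa using sum_le_sum fun i _ => div_le_one_of_le₀ (le_add_of_nonneg_right hκ.le)
    (add_nonneg (ha i) hκ.le)

lemma tsum_div_add_const_lt (ha : ∀ i, 0 ≤ a i) (hκ : 0 < κ) (hs : Summable a)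
    (hpos : ∃ i, 0 < a i) : ∑' i, a i / (a i + κ) < (∑' i, a i) / κ := by
  obtain ⟨j, hj⟩ := hpos
  rw [← tsum_div_const]
  exact (summable_div_add_const ha hκ hs).tsum_lt_tsum
    (fun i => div_le_div_of_nonneg_left (ha i) hκ (le_add_of_nonneg_left (ha i)))
    (div_lt_div_of_pos_left hj hκ (lt_add_of_pos_left κ hj)) (hs.div_const κ)

end DivAddConst

lemma inv_one_sub_div_mul_div {n k t : ℝ} (hn : n ≠ 0) :
    (1 - k / n)⁻¹ * (t / n) = t / (n - k) := by
  rw [one_sub_div hn, inv_div, div_mul_div_comm, mul_comm, mul_div_mul_right _ _ hn]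

theorem kappa_upper_bound_general
    (n : ℕ)
    (lam : ℕ → ℝ) (hlam_nonneg : ∀ i, 0 ≤ lam i)
    (hlam_summable : Summable lam)
    (κ0 : ℝ) (hκ0 : 0 < κ0)
    (hκ0_eq : ∑' i, lam i / (lam i + κ0) = (n : ℝ))
    (k : ℕ) (hk : k < n) :
    κ0 < (1 - (k : ℝ) / n)⁻¹ * ((∑' i, lam (k + i)) / n) := by
  have hkn : (k : ℝ) < n := by exact_mod_cast hk
  have hsplit := (summable_div_add_const hlam_nonneg hκ0 hlam_summable).sum_add_tsum_nat_add k
  rw [hκ0_eq] at hsplit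
  have hhead := sum_div_add_const_le_card hlam_nonneg hκ0 (range k)
  rw [card_range] at hhead
  have htail_pos : ∃ i, 0 < lam (i + k) := by
    by_contra! htail
    have htail_zero : ∀ i, lam (i + k) = 0 := fun i => (htail i).antisymm (hlam_nonneg _)
    simp only [htail_zero, zero_div, tsum_zero, add_zero] at hsplit
    linarith
  have htail := tsum_div_add_const_lt (fun i => hlam_nonneg (i + k)) hκ0
    ((summable_nat_add_iff k).2 hlam_summable) htail_pos
  simp only [add_comm k, inv_one_sub_div_mul_div (n := (n : ℝ)) (by linarith)]
  rw [lt_div_iff₀ (by linarith), ← lt_div_iff₀' hκ0]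
  linarith

/-- Upper bound on the effective regularization: For any
`0 ≤ k < n`, `κ_0 < (1 − k/n)⁻¹ · (Σ_{i>k} λ_i)/n`.
(Here `lam i` denotes `λ_{i+1}`, so `∑' i, lam (k+i) = Σ_{i>k} λ_i`.) -/
theorem kappa_upper_bound
    (n : ℕ) (hn : 1 ≤ n)
    (lam : ℕ → ℝ) (hlam_nonneg : ∀ i, 0 ≤ lam i) (hlam_mono : Antitone lam)
    (hlam_summable : Summable lam) (hlam_ne : ∃ i, lam i ≠ 0)
    (κ0 : ℝ) (hκ0 : 0 < κ0)
    (hκ0_eq : ∑' i, lam i / (lam i + κ0) = (n : ℝ))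
    (k : ℕ) (hk : k < n) :
    κ0 < (1 - (k : ℝ) / n)⁻¹ * ((∑' i, lam (k + i)) / n) :=
  kappa_upper_bound_general n lam hlam_nonneg hlam_summable κ0 hκ0 hκ0_eq k hk
end

section
/- (Optimistic rate.) Fix any integer k ≥ 0 and let ε = √((k² + 2kn)/n²). For any δ ≥ 0 for which a positive solution κ_δ of the self-consistent equation exists, it holds that (1 − ε)·√R̃_δ − √Ȓ_δ ≤ √( (Σ_{i>k} λ_i) · N_δ / n ), where Ȓ_δ = (δ²/(n² κ_δ²)) · R̃_δ is the predicted training error and N_δ = Σ_{i≥1} λ_i v_i²/(λ_i + κ_δ)² + (R̃_δ/n) · Σ_{i≥1} λ_i/(λ_i + κ_δ)² is the predicted squared RKHS norm of the ridge predictor. -/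
/-!
The self-consistent equation says `δ/κ = n - Σ L_i`, so `Ȓ = (1 - Σ L_i / n)² R̃` and the left-hand
side is at most `(Σ L_i / n - ε) √R̃`. Since `L_i ≤ 1` and `ε ≥ k/n`, this is at most
`(Σ_{i>k} L_i / n) √R̃`. Writing `L_i = λ_i · 1/(λ_i + κ)`, Cauchy–Schwarz with weights `λ_i` gives
`(Σ_{i>k} L_i)² ≤ (Σ_{i>k} λ_i) · Σ_i λ_i/(λ_i + κ)²`, and `R̃/n · Σ_i λ_i/(λ_i + κ)² ≤ N_δ`.
-/

open Finset

theorem tsum_le_sqrt_tsum_mul_tsum_of_sq_le_mul {ι : Type*} {r f g : ι → ℝ}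
    (hf : ∀ i, 0 ≤ f i) (hg : ∀ i, 0 ≤ g i) (hrfg : ∀ i, r i ^ 2 ≤ f i * g i)
    (hfs : Summable f) (hgs : Summable g) :
    ∑' i, r i ≤ √((∑' i, f i) * ∑' i, g i) := by
  refine tsum_le_of_sum_le' (Real.sqrt_nonneg _) fun s => ?_
  calc ∑ i ∈ s, r i ≤ |∑ i ∈ s, r i| := le_abs_self _
    _ ≤ √((∑ i ∈ s, f i) * ∑ i ∈ s, g i) := Real.abs_le_sqrt <|
        sum_sq_le_sum_mul_sum_of_sq_le_mul s (fun i _ => hf i) (fun i _ => hg i) fun i _ => hrfg i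
    _ ≤ √((∑' i, f i) * ∑' i, g i) :=
        Real.sqrt_le_sqrt <| mul_le_mul (hfs.sum_le_tsum s fun i _ => hf i)
          (hgs.sum_le_tsum s fun i _ => hg i) (sum_nonneg fun i _ => hg i) (tsum_nonneg hf)

theorem tsum_le_add_tsum_nat_add_of_le_one {f : ℕ → ℝ} (hf : Summable f) (hf1 : ∀ i, f i ≤ 1)
    (k : ℕ) : ∑' i, f i ≤ k + ∑' i, f (k + i) := by
  rw [← hf.sum_add_tsum_nat_add k]
  simp_rw [add_comm _ k]
  gcongr
  simpa using sum_le_card_nsmul (range k) f 1 fun i _ => hf1 i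

theorem Summable.div_add_pow {ι : Type*} {lam : ι → ℝ} (h : Summable lam) (hlam : ∀ i, 0 ≤ lam i)
    {κ : ℝ} (hκ : 0 < κ) (p : ℕ) : Summable fun i => lam i / (lam i + κ) ^ p :=
  (h.div_const (κ ^ p)).of_nonneg_of_le
    (fun i => div_nonneg (hlam i) (pow_nonneg (by linarith [hlam i]) p)) fun i =>
      div_le_div_of_nonneg_left (hlam i) (pow_pos hκ p)
        (pow_le_pow_left₀ hκ.le (le_add_of_nonneg_left (hlam i)) p)

theorem div_sq_mul_sq_eq_one_sub_div_sq {s δ κ n : ℝ} (hn : n ≠ 0) (hκ : κ ≠ 0)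
    (h : s + δ / κ = n) : δ ^ 2 / (n ^ 2 * κ ^ 2) = (1 - s / n) ^ 2 := by
  rw [show s = n - δ / κ by linarith]
  field_simp
  ring

theorem div_le_sqrt_sq_add_two_mul_mul_div_sq {k n : ℝ} (hk : 0 ≤ k) (hn : 0 ≤ n) :
    k / n ≤ √((k ^ 2 + 2 * k * n) / n ^ 2) := by
  refine Real.le_sqrt_of_sq_le ?_
  rw [div_pow]
  gcongr
  nlinarith

theorem tsum_nat_add_div_add_le_sqrt {lam : ℕ → ℝ} (hlam : ∀ i, 0 ≤ lam i) (h : Summable lam)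
    {κ : ℝ} (hκ : 0 < κ) (k : ℕ) :
    ∑' i, lam (k + i) / (lam (k + i) + κ)
      ≤ √((∑' i, lam (k + i)) * ∑' i, lam i / (lam i + κ) ^ 2) := by
  have hshift : Function.Injective (k + ·) := add_right_injective k
  have hg : ∀ i, 0 ≤ lam i / (lam i + κ) ^ 2 := fun i => div_nonneg (hlam i) (sq_nonneg _)
  have hgs : Summable fun i => lam i / (lam i + κ) ^ 2 := h.div_add_pow hlam hκ 2
  refine (tsum_le_sqrt_tsum_mul_tsum_of_sq_le_mul (fun i => hlam _) (fun i => hg _)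
    (fun i => le_of_eq ?_) (h.comp_injective hshift) (hgs.comp_injective hshift)).trans ?_
  · simp only [div_pow]; ring
  · exact Real.sqrt_le_sqrt <| mul_le_mul_of_nonneg_left (tsum_comp_le_tsum_of_inj hgs hg hshift)
      (tsum_nonneg fun i => hlam _)

/-- `lam i` is `λ_{i+1}`, so `∑' i, lam (k + i)` is `Σ_{i>k} λ_i`. -/
theorem optimistic_rate_general
    (n : ℕ) (hn : 1 ≤ n)
    (lam : ℕ → ℝ) (hlam_nonneg : ∀ i, 0 ≤ lam i)
    (hlam_summable : Summable lam)
    (v : ℕ → ℝ)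
    (δ : ℝ)
    (κδ : ℝ) (hκδ : 0 < κδ)
    (hκδ_eq : ∑' i, lam i / (lam i + κδ) + δ / κδ = (n : ℝ))
    (Rt : ℝ)
    (Rhat : ℝ)
    (hRhat : Rhat = δ ^ 2 / ((n : ℝ) ^ 2 * κδ ^ 2) * Rt)
    (Nδ : ℝ)
    (hNδ : Nδ = ∑' i, lam i * v i ^ 2 / (lam i + κδ) ^ 2
        + Rt / n * ∑' i, lam i / (lam i + κδ) ^ 2)
    (k : ℕ)
    (ε : ℝ) (hε : ε = Real.sqrt (((k : ℝ) ^ 2 + 2 * k * n) / (n : ℝ) ^ 2)) :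
    (1 - ε) * Real.sqrt Rt - Real.sqrt Rhat
      ≤ Real.sqrt ((∑' i, lam (k + i)) * Nδ / n) := by
  have hn0 : (0 : ℝ) < n := by exact_mod_cast hn
  set s := ∑' i, lam i / (lam i + κδ)
  set t := ∑' i, lam (k + i) / (lam (k + i) + κδ)
  set tail := ∑' i, lam (k + i)
  set C := ∑' i, lam i / (lam i + κδ) ^ 2
  have hst : s ≤ k + t :=
    tsum_le_add_tsum_nat_add_of_le_one (by simpa using hlam_summable.div_add_pow hlam_nonneg hκδ 1)
      (fun i => div_le_one_of_le₀ (by linarith) (by linarith [hlam_nonneg i])) k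
  have hεk : (k : ℝ) / n ≤ ε := hε ▸ div_le_sqrt_sq_add_two_mul_mul_div_sq k.cast_nonneg hn0.le
  have hN : Rt / n * C ≤ Nδ := hNδ ▸ le_add_of_nonneg_left (tsum_nonneg fun i =>
    div_nonneg (mul_nonneg (hlam_nonneg i) (sq_nonneg _)) (sq_nonneg _))
  have htail : 0 ≤ tail := tsum_nonneg fun i => hlam_nonneg _
  calc (1 - ε) * √Rt - √Rhat
      = (1 - ε) * √Rt - |1 - s / n| * √Rt := by
        rw [hRhat, div_sq_mul_sq_eq_one_sub_div_sq hn0.ne' hκδ.ne' hκδ_eq,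
          Real.sqrt_mul (sq_nonneg _), Real.sqrt_sq_eq_abs]
    _ ≤ (1 - ε) * √Rt - (1 - s / n) * √Rt := by gcongr; exact le_abs_self _
    _ = ((s - k) / n + (k / n - ε)) * √Rt := by ring
    _ ≤ (t / n + 0) * √Rt := by gcongr <;> linarith
    _ ≤ √(tail * C) / n * √Rt := by
        rw [add_zero]; gcongr; exact tsum_nat_add_div_add_le_sqrt hlam_nonneg hlam_summable hκδ k
    _ = √(tail * (Rt / n * C) / n) := by
        rw [show tail * (Rt / n * C) / n = tail * C * Rt / n ^ 2 by ring,
          Real.sqrt_div' _ (by positivity), Real.sqrt_sq hn0.le,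
          Real.sqrt_mul (mul_nonneg htail (tsum_nonneg fun i =>
            div_nonneg (hlam_nonneg i) (sq_nonneg _)))]
        ring
    _ ≤ √(tail * Nδ / n) := by gcongr

/-- Optimistic rate: Fix `k ≥ 0` and let
`ε = √((k² + 2kn)/n²)`. For any `δ ≥ 0` with a positive solution `κ_δ` of the
self-consistent equation,
`(1 − ε)·√R̃_δ − √Ȓ_δ ≤ √((Σ_{i>k} λ_i)·N_δ/n)`, where
`Ȓ_δ = (δ²/(n²κ_δ²))·R̃_δ` is the predicted training error and `N_δ` is the
predicted squared RKHS norm. (Here `lam i` denotes `λ_{i+1}`.) -/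
theorem optimistic_rate
    (n : ℕ) (hn : 1 ≤ n)
    (lam : ℕ → ℝ) (hlam_nonneg : ∀ i, 0 ≤ lam i) (hlam_mono : Antitone lam)
    (hlam_summable : Summable lam) (hlam_ne : ∃ i, lam i ≠ 0)
    (v : ℕ → ℝ) (hv : Summable fun i => v i ^ 2)
    (σ2 : ℝ) (hσ2 : 0 ≤ σ2)
    (δ : ℝ) (hδ : 0 ≤ δ)
    (κδ : ℝ) (hκδ : 0 < κδ)
    (hκδ_eq : ∑' i, lam i / (lam i + κδ) + δ / κδ = (n : ℝ))
    (Eδ : ℝ)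
    (hEδ : Eδ = (n : ℝ) / ((n : ℝ) - ∑' i, (lam i / (lam i + κδ)) ^ 2))
    (Rt : ℝ)
    (hRt : Rt = Eδ * (∑' i, (1 - lam i / (lam i + κδ)) ^ 2 * v i ^ 2 + σ2))
    (Rhat : ℝ)
    (hRhat : Rhat = δ ^ 2 / ((n : ℝ) ^ 2 * κδ ^ 2) * Rt)
    (Nδ : ℝ)
    (hNδ : Nδ = ∑' i, lam i * v i ^ 2 / (lam i + κδ) ^ 2
        + Rt / n * ∑' i, lam i / (lam i + κδ) ^ 2)
    (k : ℕ)
    (ε : ℝ) (hε : ε = Real.sqrt (((k : ℝ) ^ 2 + 2 * k * n) / (n : ℝ) ^ 2)) :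
    (1 - ε) * Real.sqrt Rt - Real.sqrt Rhat
      ≤ Real.sqrt ((∑' i, lam (k + i)) * Nδ / n) :=
  optimistic_rate_general n hn lam hlam_nonneg hlam_summable v δ κδ hκδ hκδ_eq Rt Rhat hRhat Nδ hNδ
    k ε hε
end
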